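/- Let G be a connected threshold graph on n vertices whose creation sequence contains exactly T ones (i.e., G has trace T). If q(G) = 2, then T ≥ ⌈n/2⌉. -/

import Mathlib

/-!
Let `A ∈ S(G)` have exactly two eigenvalues `l, m`. Then `(A - l)(A - m) = 0`, so `A²` vanishes
wherever `A` does off the diagonal: the rows of two distinct nonadjacent vertices are orthogonal.
For an independent set `s`, the entries of such rows inside `s` contribute nothing, so the rows of
`s`, restricted to the columns outside `s`, are pairwise orthogonal, and nonzero as soon as every
vertex of `s` has a neighbour; hence `|s| ≤ n - |s|`. In a connected threshold graph the vertices
with creation bit `0` form such an independent set, all adjacent to the last vertex.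
-/

open Matrix BigOperators

/-- The threshold graph on `Fin n` given by a creation sequence `b`:
for `i < j`, vertices `i` and `j` are adjacent iff `b j = true`. -/
def ThresholdGraph {n : ℕ} (b : Fin n → Bool) : SimpleGraph (Fin n) where
  Adj i j := i ≠ j ∧ ((i < j ∧ b j = true) ∨ (j < i ∧ b i = true))
  symm := ⟨fun _ _ h => ⟨h.1.symm, h.2.symm⟩⟩
  loopless := ⟨fun _ h => h.1 rfl⟩

/-- The threshold graph whose creation sequence is given by a list of booleans. -/
def thresholdOfList (L : List Bool) : SimpleGraph (Fin L.length) where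
  Adj i j := i ≠ j ∧ ((i < j ∧ L.get j = true) ∨ (j < i ∧ L.get i = true))
  symm := ⟨fun _ _ h => ⟨h.1.symm, h.2.symm⟩⟩
  loopless := ⟨fun _ h => h.1 rfl⟩

/-- `S(G)`: real symmetric matrices whose off-diagonal nonzero pattern is given by `G`. -/
def SMat {n : ℕ} (G : SimpleGraph (Fin n)) : Set (Matrix (Fin n) (Fin n) ℝ) :=
  {A | A.IsSymm ∧ ∀ i j : Fin n, i ≠ j → (A i j ≠ 0 ↔ G.Adj i j)}

/-- The number of distinct (real) eigenvalues of a matrix. -/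
noncomputable def numEig {n : ℕ} (A : Matrix (Fin n) (Fin n) ℝ) : ℕ :=
  (spectrum ℝ A).ncard

/-- `q(G)`: the minimum number of distinct eigenvalues over matrices in `S(G)`. -/
noncomputable def qGraph {n : ℕ} (G : SimpleGraph (Fin n)) : ℕ :=
  sInf (numEig '' SMat G)

namespace Matrix

theorem IsHermitian.sub_mul_sub_eq_zero {n : Type*} [Fintype n] [DecidableEq n]
    {A : Matrix n n ℝ} (hA : A.IsHermitian) {l m : ℝ} (h : spectrum ℝ A ⊆ {l, m}) :
    (A - algebraMap ℝ _ l) * (A - algebraMap ℝ _ m) = 0 := by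
  have hA' : IsSelfAdjoint A := hA
  have hsub (c : ℝ) : cfc (fun x => x - c) A = A - algebraMap ℝ _ c := by
    rw [cfc_sub (fun x => x) (fun _ => c), cfc_id' ℝ A, cfc_const c A]
  have hvanish : cfc (fun x => (x - l) * (x - m)) A = cfc (0 : ℝ → ℝ) A :=
    cfc_congr fun x hx => by rcases h hx with rfl | rfl <;> simp
  rwa [cfc_mul (fun x => x - l) (fun x => x - m), hsub, hsub, cfc_zero] at hvanish

theorem mul_self_apply_eq_zero_of_sub_mul_sub_eq_zero {n R : Type*} [Fintype n] [DecidableEq n]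
    [CommRing R] {A : Matrix n n R} {l m : R}
    (h : (A - algebraMap R _ l) * (A - algebraMap R _ m) = 0) {i j : n} (hij : i ≠ j)
    (hA : A i j = 0) : (A * A) i j = 0 := by
  simpa [sub_mul, mul_sub, algebraMap_eq_diagonal, hij, hA] using congrFun (congrFun h i) j

theorem card_le_card_of_pairwise_dotProduct_eq_zero {m k R : Type*} [Fintype m] [Fintype k]
    [Field R] [LinearOrder R] [IsStrictOrderedRing R] (B : Matrix m k R)
    (hortho : Pairwise fun i j => B i ⬝ᵥ B j = 0) (hne : ∀ i, B i ≠ 0) :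
    Fintype.card m ≤ Fintype.card k := by
  classical
  have hdiag : B * Bᵀ = diagonal fun i => B i ⬝ᵥ B i := by
    ext i j
    rcases eq_or_ne i j with rfl | hij
    · simp [mul_apply', dotProduct]
    · simpa [mul_apply', diagonal_apply_ne _ hij] using hortho hij
  have hdiag_ne (i : m) : B i ⬝ᵥ B i ≠ 0 := dotProduct_self_eq_zero.not.mpr (hne i)
  calc Fintype.card m = (B * Bᵀ).rank := by
        rw [hdiag, rank_diagonal, Fintype.card_congr (Equiv.subtypeUnivEquiv hdiag_ne)]
    _ ≤ B.rank := rank_mul_le_left _ _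
    _ ≤ Fintype.card k := rank_le_card_width _

end Matrix

namespace SMat

variable {n : ℕ} {G : SimpleGraph (Fin n)} {A : Matrix (Fin n) (Fin n) ℝ}

theorem apply_eq_zero_of_not_adj (hA : A ∈ SMat G) {i j : Fin n} (hij : i ≠ j)
    (hnadj : ¬G.Adj i j) : A i j = 0 :=
  not_not.mp fun h => hnadj ((hA.2 i j hij).mp h)

theorem mul_self_apply_eq_sum_compl (hA : A ∈ SMat G) {s : Finset (Fin n)} (hs : G.IsIndepSet s)
    {i j : Fin n} (hi : i ∈ s) (hj : j ∈ s) (hij : i ≠ j) :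
    (A * A) i j = ∑ k : ↥sᶜ, A i k * A j k := by
  rw [Finset.sum_coe_sort sᶜ (fun k => A i k * A j k), mul_apply, ← Finset.sum_compl_add_sum s,
    Finset.sum_eq_zero (s := s), add_zero]
  · simp_rw [hA.1.apply]
  intro k hk
  rcases eq_or_ne k i with rfl | hki
  · rw [apply_eq_zero_of_not_adj hA hij (hs hk hj hij), mul_zero]
  · rw [apply_eq_zero_of_not_adj hA hki.symm (hs hi hk hki.symm), zero_mul]

theorem card_le_card_compl_of_isIndepSet (hA : A ∈ SMat G) {l m : ℝ}
    (hspec : spectrum ℝ A ⊆ {l, m}) {s : Finset (Fin n)} (hs : G.IsIndepSet s)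
    (hnbr : ∀ i ∈ s, ∃ j, G.Adj i j) :
    s.card ≤ sᶜ.card := by
  have hsq := (isHermitian_iff_isSymm.mpr hA.1).sub_mul_sub_eq_zero hspec
  let B : Matrix s ↥sᶜ ℝ := A.submatrix (↑) (↑)
  have hortho : Pairwise fun i j => B i ⬝ᵥ B j = 0 := by
    intro i j hij
    have hij' : (i : Fin n) ≠ j := Subtype.coe_ne_coe.mpr hij
    calc B i ⬝ᵥ B j = (A * A) i j := (mul_self_apply_eq_sum_compl hA hs i.2 j.2 hij').symm
      _ = 0 := mul_self_apply_eq_zero_of_sub_mul_sub_eq_zero hsq hij'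
        (apply_eq_zero_of_not_adj hA hij' (hs i.2 j.2 hij'))
  have hrow (i : s) : B i ≠ 0 := by
    intro hi
    obtain ⟨j, hadj⟩ := hnbr i i.2
    have hj : j ∉ s := fun hj => hs i.2 hj hadj.ne hadj
    exact (hA.2 _ _ hadj.ne).mpr hadj (congrFun hi ⟨j, Finset.mem_compl.mpr hj⟩)
  simpa only [Fintype.card_coe] using card_le_card_of_pairwise_dotProduct_eq_zero B hortho hrow

end SMat

theorem exists_mem_SMat_numEig_eq_of_qGraph_eq {n k : ℕ} {G : SimpleGraph (Fin n)}
    (hq : qGraph G = k) (hk : k ≠ 0) : ∃ A ∈ SMat G, numEig A = k := by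
  have hne : (numEig '' SMat G).Nonempty := by
    by_contra h
    rw [Set.not_nonempty_iff_eq_empty] at h
    rw [qGraph, h, Nat.sInf_empty] at hq
    exact hk hq.symm
  exact hq ▸ Nat.sInf_mem hne

namespace ThresholdGraph

variable {n : ℕ}

theorem adj_of_lt {b : Fin n → Bool} {i j : Fin n} (hij : i < j) (hj : b j = true) :
    (ThresholdGraph b).Adj i j :=
  ⟨hij.ne, .inl ⟨hij, hj⟩⟩

theorem isIndepSet_false (b : Fin n → Bool) :
    (ThresholdGraph b).IsIndepSet {i | b i = false} := by
  rintro i (hi : b i = false) j (hj : b j = false) - ⟨-, h | h⟩ <;> simp_all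

end ThresholdGraph

/-- If a connected threshold graph on `n` vertices with trace `T`
satisfies `q(G) = 2`, then `T ≥ ⌈n/2⌉`. -/
theorem stmt2 {n : ℕ} (hn : 1 ≤ n) (b : Fin n → Bool)
    (hbn : b ⟨n - 1, by omega⟩ = true)
    (hq : qGraph (ThresholdGraph b) = 2) :
    (n + 1) / 2 ≤ (Finset.univ.filter (fun i : Fin n => b i = true)).card := by
  obtain ⟨A, hA, hnum⟩ := exists_mem_SMat_numEig_eq_of_qGraph_eq hq two_ne_zero
  obtain ⟨l, m, -, hspec⟩ := Set.ncard_eq_two.mp hnum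
  set s := Finset.univ.filter (fun i : Fin n => b i = false)
  have hs : (ThresholdGraph b).IsIndepSet s := by
    simpa [s] using ThresholdGraph.isIndepSet_false b
  have hnbr (i : Fin n) (hi : i ∈ s) : ∃ j, (ThresholdGraph b).Adj i j :=
    ⟨_, ThresholdGraph.adj_of_lt (lt_of_le_of_ne (Nat.le_sub_one_of_lt i.isLt)
      (by rintro rfl; simp_all [s])) hbn⟩
  have hcompl : sᶜ = Finset.univ.filter (fun i : Fin n => b i = true) := by
    ext i
    simp [s]
  have hcard := SMat.card_le_card_compl_of_isIndepSet hA hspec.le hs hnbr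
  have htotal := s.card_add_card_compl
  rw [hcompl] at hcard htotal
  rw [Fintype.card_fin] at htotal
  omega
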